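/- For t, α ≥ 0, μ > 0 and k ≥ 1, the function g_{α,k}(t) = k(μ² + t)^α / (k + (μ² + t)^α) satisfies g'_{α,k}(t)(μ² + t) ≤ α g_{α,k}(t) and |g''_{α,k}(t)|(μ² + t) ≤ 3(α + 1) g'_{α,k}(t) for all t ≥ 0. -/

import Mathlib

/-!
Write `u = μ² + t` and `p = u^α`, so that `g = k p / (k + p)` and `g' = k² α p / (u (k + p)²)`.
Then `g' u = α g · k / (k + p) ≤ α g`. The logarithmic derivative of `g'` is
`((α - 1)(k + p) - 2 α p) / (u (k + p))`, and since `0 ≤ p ≤ k + p` its numerator is at most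
`3 (α + 1)(k + p)` in absolute value, which gives `|g''| u ≤ 3 (α + 1) g'`.
-/

open Real

noncomputable def gTrunc (μ α k : ℝ) : ℝ → ℝ :=
  fun t => k * (μ ^ 2 + t) ^ α / (k + (μ ^ 2 + t) ^ α)

open Filter Topology

lemma abs_sub_one_mul_sub_two_mul_le {α p q : ℝ} (hα : 0 ≤ α) (hp : 0 ≤ p) (hpq : p ≤ q) :
    |(α - 1) * q - 2 * α * p| ≤ 3 * (α + 1) * q := by
  rw [abs_le]
  constructor <;> nlinarith [mul_le_mul_of_nonneg_left hpq hα, mul_nonneg hα hp]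

lemma hasDerivAt_const_add_rpow {c α t : ℝ} (ht : 0 < c + t) :
    HasDerivAt (fun s => (c + s) ^ α) (α * (c + t) ^ α / (c + t)) t := by
  have h := (hasDerivAt_rpow_const (p := α) (Or.inl ht.ne')).comp t
    ((hasDerivAt_id t).const_add c)
  rw [mul_one, rpow_sub_one ht.ne', ← mul_div_assoc] at h
  exact h

noncomputable def gTruncDeriv (μ α k : ℝ) : ℝ → ℝ :=
  fun t => k ^ 2 * α * (μ ^ 2 + t) ^ α / ((μ ^ 2 + t) * (k + (μ ^ 2 + t) ^ α) ^ 2)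

section

variable {μ α k t : ℝ}

lemma hasDerivAt_gTrunc (hk : 0 ≤ k) (ht : 0 < μ ^ 2 + t) :
    HasDerivAt (gTrunc μ α k) (gTruncDeriv μ α k t) t := by
  have hp := hasDerivAt_const_add_rpow (α := α) ht
  have hq : 0 < k + (μ ^ 2 + t) ^ α := by positivity
  refine ((hp.const_mul k).div (hp.const_add k) hq.ne').congr_deriv ?_
  simp only [gTruncDeriv]
  field_simp
  ring

lemma deriv_gTrunc_eventuallyEq (hk : 0 ≤ k) (ht : 0 < μ ^ 2 + t) :
    deriv (gTrunc μ α k) =ᶠ[𝓝 t] gTruncDeriv μ α k := by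
  have hopen : IsOpen {s : ℝ | 0 < μ ^ 2 + s} := isOpen_lt continuous_const (by fun_prop)
  filter_upwards [hopen.mem_nhds ht] with s hs
  exact (hasDerivAt_gTrunc hk hs).deriv

lemma hasDerivAt_gTruncDeriv (hk : 0 ≤ k) (ht : 0 < μ ^ 2 + t) :
    HasDerivAt (gTruncDeriv μ α k)
      (gTruncDeriv μ α k t * (((α - 1) * (k + (μ ^ 2 + t) ^ α) - 2 * α * (μ ^ 2 + t) ^ α) /
        ((μ ^ 2 + t) * (k + (μ ^ 2 + t) ^ α)))) t := by
  have hp := hasDerivAt_const_add_rpow (α := α) ht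
  have hu := (hasDerivAt_id t).const_add (μ ^ 2)
  have hq : 0 < k + (μ ^ 2 + t) ^ α := by positivity
  refine ((hp.const_mul (k ^ 2 * α)).div (hu.mul ((hp.const_add k).pow 2))
    (mul_pos ht (pow_pos hq 2)).ne').congr_deriv ?_
  simp only [gTruncDeriv, id, Pi.mul_apply, Pi.pow_apply]
  field_simp
  ring

lemma deriv_deriv_gTrunc (hk : 0 ≤ k) (ht : 0 < μ ^ 2 + t) :
    deriv (deriv (gTrunc μ α k)) t =
      gTruncDeriv μ α k t * (((α - 1) * (k + (μ ^ 2 + t) ^ α) - 2 * α * (μ ^ 2 + t) ^ α) /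
        ((μ ^ 2 + t) * (k + (μ ^ 2 + t) ^ α))) := by
  rw [(deriv_gTrunc_eventuallyEq hk ht).deriv_eq]
  exact (hasDerivAt_gTruncDeriv hk ht).deriv

lemma gTruncDeriv_nonneg (hα : 0 ≤ α) (hk : 0 ≤ k) (ht : 0 < μ ^ 2 + t) :
    0 ≤ gTruncDeriv μ α k t := by
  have := rpow_nonneg ht.le α
  unfold gTruncDeriv
  positivity

lemma gTruncDeriv_mul_le (hα : 0 ≤ α) (hk : 0 ≤ k) (ht : 0 < μ ^ 2 + t) :
    gTruncDeriv μ α k t * (μ ^ 2 + t) ≤ α * gTrunc μ α k t := by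
  have hp := rpow_nonneg ht.le α
  have hq : 0 < k + (μ ^ 2 + t) ^ α := by positivity
  have hg : 0 ≤ α * gTrunc μ α k t := by unfold gTrunc; positivity
  calc gTruncDeriv μ α k t * (μ ^ 2 + t)
      = α * gTrunc μ α k t * (k / (k + (μ ^ 2 + t) ^ α)) := by
        simp only [gTruncDeriv, gTrunc]
        field_simp
    _ ≤ α * gTrunc μ α k t * 1 := by
        gcongr
        exact (div_le_one hq).2 (le_add_of_nonneg_right hp)
    _ = α * gTrunc μ α k t := mul_one _

lemma abs_deriv_deriv_gTrunc_mul_le (hα : 0 ≤ α) (hk : 0 ≤ k) (ht : 0 < μ ^ 2 + t) :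
    |deriv (deriv (gTrunc μ α k)) t| * (μ ^ 2 + t) ≤ 3 * (α + 1) * gTruncDeriv μ α k t := by
  have hp := rpow_nonneg ht.le α
  have hq : 0 < k + (μ ^ 2 + t) ^ α := by positivity
  have hbound := abs_sub_one_mul_sub_two_mul_le hα hp (le_add_of_nonneg_left hk)
  rw [deriv_deriv_gTrunc hk ht, abs_mul, abs_of_nonneg (gTruncDeriv_nonneg hα hk ht), abs_div,
    abs_of_pos (mul_pos ht hq)]
  calc gTruncDeriv μ α k t * (|(α - 1) * (k + (μ ^ 2 + t) ^ α) - 2 * α * (μ ^ 2 + t) ^ α| /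
        ((μ ^ 2 + t) * (k + (μ ^ 2 + t) ^ α))) * (μ ^ 2 + t)
      = gTruncDeriv μ α k t * (|(α - 1) * (k + (μ ^ 2 + t) ^ α) - 2 * α * (μ ^ 2 + t) ^ α| /
        (k + (μ ^ 2 + t) ^ α)) := by
        field_simp
    _ ≤ gTruncDeriv μ α k t * (3 * (α + 1)) := by
        gcongr
        · exact gTruncDeriv_nonneg hα hk ht
        · exact (div_le_iff₀ hq).2 hbound
    _ = 3 * (α + 1) * gTruncDeriv μ α k t := mul_comm _ _

end

/-- Derivative estimates for the smooth truncation: for `t, α ≥ 0`, `μ > 0`, `k ≥ 1`,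
`g'_{α,k}(t)(μ²+t) ≤ α g_{α,k}(t)` and `|g''_{α,k}(t)|(μ²+t) ≤ 3(α+1) g'_{α,k}(t)`. -/
theorem stmt6 (μ α k : ℝ) (hμ : 0 < μ) (hα : 0 ≤ α) (hk : 1 ≤ k) :
    ∀ t : ℝ, 0 ≤ t →
      deriv (gTrunc μ α k) t * (μ ^ 2 + t) ≤ α * gTrunc μ α k t ∧
        |deriv (deriv (gTrunc μ α k)) t| * (μ ^ 2 + t) ≤
          3 * (α + 1) * deriv (gTrunc μ α k) t := by
  intro t ht
  have hu : 0 < μ ^ 2 + t := by positivity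
  have hk₀ : 0 ≤ k := zero_le_one.trans hk
  rw [(hasDerivAt_gTrunc hk₀ hu).deriv]
  exact ⟨gTruncDeriv_mul_le hα hk₀ hu, abs_deriv_deriv_gTrunc_mul_le hα hk₀ hu⟩
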